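/- Let V be an isometry on a Hilbert space K and let 𝔐 = K ⊖ VK. Then the subspaces Vᵏ𝔐, k ≥ 0, are pairwise orthogonal and K = (⊕_{k=0}^∞ Vᵏ𝔐) ⊕ (∩_{k=0}^∞ VᵏK), where ∩ₖ VᵏK reduces V and V restricted to it is unitary. -/

import Mathlib

open ContinuousLinearMap

/-- Wold–Kolmogorov decomposition: if `V` is an isometry on a Hilbert space `K` and
`𝔐 = K ⊖ VK`, then the subspaces `Vᵏ𝔐`, `k ≥ 0`, are pairwise orthogonal,
`K = (⊕_{k=0}^∞ Vᵏ𝔐) ⊕ (∩_{k=0}^∞ VᵏK)`, and the residual part `∩ₖ VᵏK` reduces `V`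
to a unitary operator. -/
theorem wold_decomposition
    {K : Type*} [NormedAddCommGroup K] [InnerProductSpace ℂ K] [CompleteSpace K]
    (V : K →L[ℂ] K) (hV : adjoint V ∘L V = ContinuousLinearMap.id ℂ K)
    (𝔐 : Submodule ℂ K) (h𝔐 : 𝔐 = (LinearMap.range (V : K →ₗ[ℂ] K))ᗮ)
    (R : Submodule ℂ K) (hR : R = ⨅ k : ℕ, LinearMap.range ((V ^ k : K →L[ℂ] K) : K →ₗ[ℂ] K)) :
    (∀ (j k : ℕ), j ≠ k → ∀ x ∈ 𝔐, ∀ y ∈ 𝔐,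
        inner ℂ ((V ^ j) x) ((V ^ k) y) = (0 : ℂ)) ∧
    (∀ x ∈ R, ∀ k : ℕ, ∀ y ∈ 𝔐, inner ℂ x ((V ^ k) y) = (0 : ℂ)) ∧
    ((⨆ k : ℕ, 𝔐.map ((V ^ k : K →L[ℂ] K) : K →ₗ[ℂ] K)) ⊔ R).topologicalClosure = ⊤ ∧
    (∀ x ∈ R, V x ∈ R) ∧ (∀ x ∈ R, adjoint V x ∈ R) ∧
    (∀ y ∈ R, ∃ x ∈ R, V x = y) := by
  -- Basic consequences of `V* V = 1`.
  have hVV : ∀ x : K, adjoint V (V x) = x := by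
    intro x
    have := congrArg (fun f : K →L[ℂ] K => f x) hV
    simpa using this
  have hiso : ∀ a b : K, (inner ℂ (V a) (V b) : ℂ) = inner ℂ a b := by
    intro a b
    conv_rhs => rw [← hVV b]
    rw [adjoint_inner_right]
  have hisok : ∀ (k : ℕ) (a b : K),
      (inner ℂ ((V ^ k) a) ((V ^ k) b) : ℂ) = inner ℂ a b := by
    intro k
    induction k with
    | zero => intro a b; simp
    | succ n ih =>
      intro a b
      have h1 : (V ^ (n + 1)) a = (V ^ n) (V a) := by
        rw [pow_succ]; rfl
      have h2 : (V ^ (n + 1)) b = (V ^ n) (V b) := by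
        rw [pow_succ]; rfl
      rw [h1, h2, ih, hiso]
  -- Membership in 𝔐 means orthogonal to the range of V.
  have h𝔐mem : ∀ x ∈ 𝔐, ∀ z : K, (inner ℂ (V z) x : ℂ) = 0 := by
    intro x hx z
    rw [h𝔐, Submodule.mem_orthogonal] at hx
    exact hx (V z) ⟨z, rfl⟩
  have h𝔐mem' : ∀ x ∈ 𝔐, ∀ z : K, (inner ℂ x (V z) : ℂ) = 0 := by
    intro x hx z
    rw [← inner_conj_symm, h𝔐mem x hx z, map_zero]
  -- Key orthogonality computation.
  have key : ∀ (j d : ℕ) (x y : K), x ∈ 𝔐 →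
      (inner ℂ ((V ^ j) x) ((V ^ (j + (d + 1))) y) : ℂ) = 0 := by
    intro j d x y hx
    have h1 : (V ^ (j + (d + 1))) y = (V ^ j) ((V ^ (d + 1)) y) := by
      rw [pow_add]; rfl
    have h2 : (V ^ (d + 1)) y = V ((V ^ d) y) := by
      rw [pow_succ']; rfl
    rw [h1, hisok, h2, h𝔐mem' x hx]
  -- Part 1: pairwise orthogonality of the Vᵏ𝔐.
  have part1 : ∀ (j k : ℕ), j ≠ k → ∀ x ∈ 𝔐, ∀ y ∈ 𝔐,
      inner ℂ ((V ^ j) x) ((V ^ k) y) = (0 : ℂ) := by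
    intro j k hjk x hx y hy
    rcases lt_or_gt_of_ne hjk with h | h
    · obtain ⟨d, rfl⟩ : ∃ d, k = j + (d + 1) :=
        ⟨k - j - 1, by omega⟩
      exact key j d x y hx
    · obtain ⟨d, rfl⟩ : ∃ d, j = k + (d + 1) :=
        ⟨j - k - 1, by omega⟩
      rw [← inner_conj_symm, key k d y x hy, map_zero]
  -- Part 2: R is orthogonal to each Vᵏ𝔐.
  have part2 : ∀ x ∈ R, ∀ k : ℕ, ∀ y ∈ 𝔐, inner ℂ x ((V ^ k) y) = (0 : ℂ) := by
    intro x hx k y hy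
    rw [hR, Submodule.mem_iInf] at hx
    obtain ⟨z, hz⟩ := hx (k + 1)
    have hz' : x = (V ^ k) (V z) := by
      rw [← hz, pow_succ]; rfl
    rw [hz', hisok]
    exact h𝔐mem y hy z
  -- V as a linear isometry; range of V is closed.
  set W : Submodule ℂ K := LinearMap.range (V : K →ₗ[ℂ] K) with hW
  have hnorm : ∀ x : K, ‖V x‖ = ‖x‖ := by
    intro x
    have : (inner ℂ (V x) (V x) : ℂ) = inner ℂ x x := hiso x x
    have h1 : ‖V x‖ ^ 2 = ‖x‖ ^ 2 := by
      rw [← @inner_self_eq_norm_sq ℂ, ← @inner_self_eq_norm_sq ℂ, this]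
    nlinarith [norm_nonneg (V x), norm_nonneg x]
  have hWclosed : IsClosed (W : Set K) := by
    have hisom : Isometry (V : K → K) :=
      AddMonoidHomClass.isometry_of_norm V hnorm
    have : IsClosed (Set.range (V : K → K)) :=
      hisom.isClosedEmbedding.isClosed_range
    simpa [hW, LinearMap.coe_range] using this
  haveI : CompleteSpace W := hWclosed.completeSpace_coe
  -- Part 3: totality.
  have part3 : ((⨆ k : ℕ, 𝔐.map ((V ^ k : K →L[ℂ] K) : K →ₗ[ℂ] K)) ⊔ R).topologicalClosure
      = ⊤ := by
    rw [Submodule.topologicalClosure_eq_top_iff]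
    rw [Submodule.eq_bot_iff]
    intro x hx
    rw [Submodule.mem_orthogonal] at hx
    have hx1 : ∀ (k : ℕ) (m : K), m ∈ 𝔐 → (inner ℂ ((V ^ k) m) x : ℂ) = 0 := by
      intro k m hm
      refine hx _ (Submodule.mem_sup_left ?_)
      exact Submodule.mem_iSup_of_mem k ⟨m, hm, rfl⟩
    have hx2 : ∀ r ∈ R, (inner ℂ r x : ℂ) = 0 := fun r hr =>
      hx r (Submodule.mem_sup_right hr)
    -- x belongs to every range V^k
    have hxR : ∀ k : ℕ, x ∈ LinearMap.range ((V ^ k : K →L[ℂ] K) : K →ₗ[ℂ] K) := by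
      intro k
      induction k with
      | zero => exact ⟨x, by simp⟩
      | succ n ih =>
        obtain ⟨z, hz⟩ := ih
        set m : K := z - (W.orthogonalProjectionOnto z : K) with hm
        have hm𝔐 : m ∈ 𝔐 := by
          rw [h𝔐]
          exact W.sub_starProjection_mem_orthogonal z
        obtain ⟨w, hw⟩ : (W.orthogonalProjectionOnto z : K) ∈ W :=
          Submodule.coe_mem _
        have hzdecomp : z = m + V w := by
          have hw' : (V w : K) = (W.orthogonalProjectionOnto z : K) := hw
          rw [hm, hw']; abel
        have hVw : ∀ a : K, (inner ℂ ((V ^ n) a) ((V ^ n) (V w)) : ℂ) = inner ℂ a (V w) :=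
          fun a => hisok n a (V w)
        have horth : (inner ℂ ((V ^ n) m) x : ℂ) = 0 := hx1 n m hm𝔐
        have hxsplit : x = (V ^ n) m + (V ^ n) (V w) := by
          rw [← map_add, ← hzdecomp]; exact hz.symm
        have hm0 : m = 0 := by
          have h1 : (inner ℂ ((V ^ n) m) x : ℂ)
              = inner ℂ m m + inner ℂ m (V w) := by
            rw [hxsplit, inner_add_right, hisok, hVw m]
          rw [horth] at h1
          have h2 : (inner ℂ m (V w) : ℂ) = 0 := h𝔐mem' m hm𝔐 w
          have h3 : (inner ℂ m m : ℂ) = 0 := by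
            have := h1.symm
            rw [h2, add_zero] at this
            exact this
          exact inner_self_eq_zero.mp h3
        refine ⟨w, ?_⟩
        rw [pow_succ]
        show (V ^ n) (V w) = x
        rw [hxsplit, hm0, map_zero, zero_add]
    have hxRmem : x ∈ R := by
      rw [hR, Submodule.mem_iInf]; exact hxR
    have : (inner ℂ x x : ℂ) = 0 := hx2 x hxRmem
    exact inner_self_eq_zero.mp this
  -- Part 4: V maps R into R.
  have part4 : ∀ x ∈ R, V x ∈ R := by
    intro x hx
    rw [hR, Submodule.mem_iInf] at hx ⊢
    intro k
    obtain ⟨z, hz⟩ := hx k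
    have hcomm : (V ^ k) (V z) = V ((V ^ k) z) := by
      have h1 : (V ^ (k + 1)) z = (V ^ k) (V z) := by rw [pow_succ]; rfl
      have h2 : (V ^ (k + 1)) z = V ((V ^ k) z) := by rw [pow_succ']; rfl
      rw [← h1, h2]
    refine ⟨V z, ?_⟩
    show (V ^ k) (V z) = V x
    rw [hcomm]
    exact congrArg V hz
  -- Part 5: V* maps R into R.
  have part5 : ∀ x ∈ R, adjoint V x ∈ R := by
    intro x hx
    rw [hR, Submodule.mem_iInf] at hx ⊢
    intro k
    obtain ⟨z, hz⟩ := hx (k + 1)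
    refine ⟨z, ?_⟩
    have h : V ((V ^ k) z) = x := by
      rw [← hz, pow_succ']; rfl
    rw [← h]
    exact (hVV ((V ^ k) z)).symm
  -- Part 6: V is onto R.
  have part6 : ∀ y ∈ R, ∃ x ∈ R, V x = y := by
    intro y hy
    refine ⟨adjoint V y, part5 y hy, ?_⟩
    have hy1 : y ∈ W := by
      rw [hR, Submodule.mem_iInf] at hy
      obtain ⟨z, hz⟩ := hy 1
      exact ⟨z, by simpa using hz⟩
    obtain ⟨z, hz⟩ := hy1
    rw [← hz]
    show V (adjoint V (V z)) = V z
    rw [hVV]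
  exact ⟨part1, part2, part3, part4, part5, part6⟩
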